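/- arXiv:2605.11291 — 2 statements merged into one kernel-verified Lean document; each statement's English description precedes it below -/
import Mathlib

section
/- Let k ≥ 1, C ≥ 2, λ₁,…,λ_C ∈ (0,1) with ∑_{i=1}^C λᵢ = 1, and let ψ : ℝ^k → ℝ be strictly convex and argument-wise strictly increasing. Let A* be the unique minimizer of S over 𝒜*, and let 𝒞' ⊆ {1,…,C} be a subset of indices whose probabilities are all equal (λᵢ = λⱼ for all i, j ∈ 𝒞'). Then there exists a constant c ∈ ℝ such that A*_{ij} = c for all distinct i, j ∈ 𝒞'. -/
open Matrix

/-- `ψ : ℝ^k → ℝ` is argument-wise strictly increasing. -/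
def ArgwiseStrictMono {k : ℕ} (ψ : (Fin k → ℝ) → ℝ) : Prop :=
  ∀ (i : Fin k) (t : Fin k → ℝ) (s s' : ℝ), s < s' →
    ψ (Function.update t i s) < ψ (Function.update t i s')

/-- `S(A) = ∑_{i, j₁,…,j_k} (λᵢ ∏ₜ λ_{jₜ}) ψ(A_{i j₁} − 1, …, A_{i j_k} − 1)`. -/
noncomputable def S {k C : ℕ} (ψ : (Fin k → ℝ) → ℝ) (lam : Fin C → ℝ)
    (A : Matrix (Fin C) (Fin C) ℝ) : ℝ :=
  ∑ i : Fin C, ∑ j : Fin k → Fin C,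
    (lam i * ∏ t, lam (j t)) * ψ (fun t => A i (j t) - 1)

/-- `𝒜*` : real symmetric PSD `C×C` matrices with unit diagonal. -/
def AstarSet (C : ℕ) : Set (Matrix (Fin C) (Fin C) ℝ) :=
  {A | A.PosSemidef ∧ ∀ i, A i i = 1}

/-!
`S` is a positively weighted sum of the strictly convex `ψ` evaluated at affine functions of the
matrix, and one of these functions already separates any two distinct matrices, so `S` is strictly
convex; since `AstarSet C` is convex, `S` has at most one minimizer on it. A permutation of the
classes that preserves `lam` leaves both `S` and `AstarSet C` invariant, so it also fixes the
minimizer `A`. Swaps inside `C'` preserve `lam`, and they act transitively on the ordered pairs of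
distinct elements of `C'`.
-/

lemma apply_swap_eq_self {α β : Type*} [DecidableEq α] {f : α → β} {a b : α}
    (hab : f a = f b) (x : α) : f (Equiv.swap a b x) = f x := by
  rw [Equiv.swap_apply_def]
  split_ifs with hxa hxb
  · rw [hxa, hab]
  · rw [hxb, hab]
  · rfl

lemma apply_swap_eq_of_swap_invariant {α β : Type*} [DecidableEq α] {f : α → α → β} {s : Set α}
    (hf : ∀ a ∈ s, ∀ b ∈ s, ∀ i j, f (Equiv.swap a b i) (Equiv.swap a b j) = f i j)
    {i j i' j' : α} (hi : i ∈ s) (hj : j ∈ s) (hi' : i' ∈ s) (hj' : j' ∈ s)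
    (hij : i ≠ j) (hij' : i' ≠ j') : f i j = f i' j' := by
  set j₁ := Equiv.swap i i' j
  have hj₁ : j₁ ∈ s := by
    simp only [j₁, Equiv.swap_apply_def]
    split_ifs <;> assumption
  have hij₁ : i' ≠ j₁ := by
    rw [← Equiv.swap_apply_left i i']
    exact (Equiv.swap i i').injective.ne hij
  -- Move `i` to `i'` first, then `j₁` to `j'` by a swap fixing `i'`.
  calc f i j = f i' j₁ := by rw [← hf i hi i' hi', Equiv.swap_apply_left]
    _ = f i' j' := by
      rw [← hf j₁ hj₁ j' hj', Equiv.swap_apply_of_ne_of_ne hij₁ hij', Equiv.swap_apply_left]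

lemma exists_eq_offDiag_of_swap_invariant {α β : Type*} [DecidableEq α] [Nonempty β]
    {f : α → α → β} {s : Set α}
    (hf : ∀ a ∈ s, ∀ b ∈ s, ∀ i j, f (Equiv.swap a b i) (Equiv.swap a b j) = f i j) :
    ∃ c, ∀ i ∈ s, ∀ j ∈ s, i ≠ j → f i j = c := by
  by_cases h : ∃ i₀ ∈ s, ∃ j₀ ∈ s, i₀ ≠ j₀
  · obtain ⟨i₀, hi₀, j₀, hj₀, hij₀⟩ := h
    exact ⟨f i₀ j₀, fun i hi j hj hij =>
      apply_swap_eq_of_swap_invariant hf hi hj hi₀ hj₀ hij hij₀⟩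
  · push Not at h
    exact ⟨Classical.arbitrary β, fun i hi j hj hij => absurd (h i hi j hj) hij⟩

lemma convex_AstarSet (C : ℕ) : Convex ℝ (AstarSet C) := by
  intro A hA B hB a b ha hb hab
  refine ⟨(hA.1.smul ha).add (hB.1.smul hb), fun i => ?_⟩
  simp [hA.2 i, hB.2 i, hab]

lemma submatrix_mem_AstarSet {C : ℕ} {A : Matrix (Fin C) (Fin C) ℝ} (hA : A ∈ AstarSet C)
    (σ : Fin C → Fin C) : A.submatrix σ σ ∈ AstarSet C :=
  ⟨hA.1.submatrix σ, fun i => hA.2 (σ i)⟩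

lemma S_eq_sum_prod {k C : ℕ} (ψ : (Fin k → ℝ) → ℝ) (lam : Fin C → ℝ)
    (A : Matrix (Fin C) (Fin C) ℝ) :
    S ψ lam A = ∑ p : Fin C × (Fin k → Fin C),
      (lam p.1 * ∏ t, lam (p.2 t)) * ψ (fun t => A p.1 (p.2 t) - 1) := by
  rw [S, Fintype.sum_prod_type]

lemma S_submatrix_perm {k C : ℕ} (ψ : (Fin k → ℝ) → ℝ) {lam : Fin C → ℝ}
    (A : Matrix (Fin C) (Fin C) ℝ) {σ : Equiv.Perm (Fin C)} (hσ : ∀ i, lam (σ i) = lam i) :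
    S ψ lam (A.submatrix σ σ) = S ψ lam A := by
  refine Fintype.sum_equiv σ _ _ fun i => ?_
  refine Fintype.sum_equiv (Equiv.piCongrRight fun _ => σ) _ _ fun j => ?_
  simp only [Equiv.piCongrRight_apply, Pi.map_apply, submatrix_apply, hσ]

lemma strictConvexOn_S {k C : ℕ} (hk : 1 ≤ k) {lam : Fin C → ℝ} (hlam : ∀ i, 0 < lam i)
    {ψ : (Fin k → ℝ) → ℝ} (hψ : StrictConvexOn ℝ Set.univ ψ) :
    StrictConvexOn ℝ Set.univ (S ψ lam) := by
  refine ⟨convex_univ, fun A _ B _ hAB a b ha hb hab => ?_⟩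
  obtain ⟨i₀, j₀, hij₀⟩ : ∃ i j, A i j ≠ B i j := by
    by_contra! h
    exact hAB (Matrix.ext h)
  let arg (M : Matrix (Fin C) (Fin C) ℝ) (p : Fin C × (Fin k → Fin C)) : Fin k → ℝ :=
    fun t => M p.1 (p.2 t) - 1
  have harg : ∀ p, arg (a • A + b • B) p = a • arg A p + b • arg B p := fun p => by
    funext t
    simp only [arg, Matrix.add_apply, Matrix.smul_apply, Pi.add_apply, Pi.smul_apply, smul_eq_mul]
    linear_combination hab
  have hw : ∀ p : Fin C × (Fin k → Fin C), 0 < lam p.1 * ∏ t, lam (p.2 t) := fun p =>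
    mul_pos (hlam p.1) (Finset.prod_pos fun t _ => hlam (p.2 t))
  simp only [S_eq_sum_prod, smul_eq_mul, Finset.mul_sum, ← Finset.sum_add_distrib]
  refine Finset.sum_lt_sum (fun p _ => ?_) ⟨(i₀, fun _ => j₀), Finset.mem_univ _, ?_⟩
  · have h := hψ.convexOn.2 (Set.mem_univ (arg A p)) (Set.mem_univ (arg B p)) ha.le hb.le hab
    rw [← harg] at h
    simp only [smul_eq_mul] at h
    nlinarith [mul_le_mul_of_nonneg_left h (hw p).le]
  · set p : Fin C × (Fin k → Fin C) := (i₀, fun _ => j₀)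
    have hne : arg A p ≠ arg B p := fun h => hij₀ <| by
      simpa [arg, p] using congrFun h ⟨0, hk⟩
    have h := hψ.2 (Set.mem_univ _) (Set.mem_univ _) hne ha hb hab
    rw [← harg] at h
    simp only [smul_eq_mul] at h
    nlinarith [mul_lt_mul_of_pos_left h (hw p)]

lemma submatrix_perm_eq_of_isMinOn {k C : ℕ} (hk : 1 ≤ k) {lam : Fin C → ℝ}
    (hlam : ∀ i, 0 < lam i) {ψ : (Fin k → ℝ) → ℝ} (hψ : StrictConvexOn ℝ Set.univ ψ)
    {A : Matrix (Fin C) (Fin C) ℝ} (hA : A ∈ AstarSet C) (hmin : IsMinOn (S ψ lam) (AstarSet C) A)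
    {σ : Equiv.Perm (Fin C)} (hσ : ∀ i, lam (σ i) = lam i) :
    A.submatrix σ σ = A := by
  have hminσ : IsMinOn (S ψ lam) (AstarSet C) (A.submatrix σ σ) := by
    rw [isMinOn_iff] at hmin ⊢
    simpa only [S_submatrix_perm ψ A hσ] using hmin
  exact ((strictConvexOn_S hk hlam hψ).subset (Set.subset_univ _) (convex_AstarSet C)).eq_of_isMinOn
    hminσ hmin (submatrix_mem_AstarSet hA σ) hA

theorem stmt11_general (k C : ℕ) (hk : 1 ≤ k)
    (lam : Fin C → ℝ) (hlam : ∀ i, lam i ∈ Set.Ioo (0 : ℝ) 1)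
    (ψ : (Fin k → ℝ) → ℝ)
    (hconv : StrictConvexOn ℝ Set.univ ψ)
    (A : Matrix (Fin C) (Fin C) ℝ) (hA : A ∈ AstarSet C)
    (hmin : ∀ B ∈ AstarSet C, S ψ lam A ≤ S ψ lam B)
    (C' : Set (Fin C)) (hC' : ∀ i ∈ C', ∀ j ∈ C', lam i = lam j) :
    ∃ c : ℝ, ∀ i ∈ C', ∀ j ∈ C', i ≠ j → A i j = c := by
  refine exists_eq_offDiag_of_swap_invariant fun a ha b hb i j => ?_
  have hfix := submatrix_perm_eq_of_isMinOn hk (fun i => (hlam i).1) hconv hA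
    (isMinOn_iff.2 hmin) (apply_swap_eq_self (hC' a ha b hb))
  exact congrFun (congrFun hfix i) j

/-- if `A*` is the (unique) minimizer of `S` over `𝒜*` and `𝒞'` is a set of
classes with equal probabilities, then all off-diagonal entries of `A*` indexed by distinct
elements of `𝒞'` are equal to a common constant. -/
theorem stmt11 (k C : ℕ) (hk : 1 ≤ k) (hC : 2 ≤ C)
    (lam : Fin C → ℝ) (hlam : ∀ i, lam i ∈ Set.Ioo (0 : ℝ) 1) (hsum : ∑ i, lam i = 1)
    (ψ : (Fin k → ℝ) → ℝ)
    (hconv : StrictConvexOn ℝ Set.univ ψ) (hmono : ArgwiseStrictMono ψ)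
    (A : Matrix (Fin C) (Fin C) ℝ) (hA : A ∈ AstarSet C)
    (hmin : ∀ B ∈ AstarSet C, S ψ lam A ≤ S ψ lam B)
    (C' : Set (Fin C)) (hC' : ∀ i ∈ C', ∀ j ∈ C', lam i = lam j) :
    ∃ c : ℝ, ∀ i ∈ C', ∀ j ∈ C', i ≠ j → A i j = c :=
  stmt11_general k C hk lam hlam ψ hconv A hA hmin C' hC'
end

section
/- Let k ≥ 1 and let ψ : ℝ^k → ℝ be convex and argument-wise strictly increasing. Let u ∈ ℝ^k have all components nonnegative with u ≠ 0. Then there exists δ > 0 such that for all t, t' ∈ [−2, 0] with t' ≤ t: (t − t')·δ ≤ ψ(t·u) − ψ(t'·u). -/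
/-!
Along the ray `s ↦ s • u` the function `g s = ψ (s • u)` is convex, and it is strictly increasing
because raising the coordinates of `u` one at a time never decreases `ψ` while raising a
coordinate with `u i > 0` strictly increases it. A convex function has nondecreasing secant
slopes, so on `[-2, 0]` every slope of `g` is at least its slope `δ = g (-2) - g (-3) > 0` on
`[-3, -2]`.
-/

open Function Set

theorem monotone_of_forall_monotone_update {ι : Type*} [Fintype ι] [DecidableEq ι]
    {α : ι → Type*} [∀ i, Preorder (α i)] {β : Type*} [Preorder β] {f : (∀ i, α i) → β}
    (hf : ∀ i x, Monotone fun s => f (update x i s)) : Monotone f := by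
  intro x y hxy
  have key : ∀ s : Finset ι, f x ≤ f (s.piecewise y x) := by
    intro s
    induction s using Finset.induction with
    | empty => simp
    | insert j s hj ih =>
      refine ih.trans ?_
      rw [Finset.piecewise_insert]
      conv_lhs => rw [← update_eq_self j (s.piecewise y x), Finset.piecewise_eq_of_notMem _ _ _ hj]
      exact hf j _ (hxy j)
  simpa using key Finset.univ

namespace ArgwiseStrictMono

variable {k : ℕ} {ψ : (Fin k → ℝ) → ℝ}

theorem monotone (hψ : ArgwiseStrictMono ψ) : Monotone ψ :=
  monotone_of_forall_monotone_update fun i x => StrictMono.monotone (hψ i x)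

theorem strictMono_smul (hψ : ArgwiseStrictMono ψ) {u : Fin k → ℝ} (hu : 0 ≤ u) (hu0 : u ≠ 0) :
    StrictMono fun s : ℝ => ψ (s • u) := by
  intro s s' hss'
  obtain ⟨i, hi⟩ : ∃ i, u i ≠ 0 := Function.ne_iff.mp hu0
  have hui : 0 < u i := (hu i).lt_of_ne' hi
  have hle : s • u ≤ update (s' • u) i (s * u i) := by
    intro j
    rcases eq_or_ne j i with rfl | hji
    · simp
    · simpa [update_of_ne hji] using mul_le_mul_of_nonneg_right hss'.le (hu j)
  calc ψ (s • u) ≤ ψ (update (s' • u) i (s * u i)) := hψ.monotone hle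
    _ < ψ (update (s' • u) i (s' * u i)) := hψ i _ _ _ (mul_lt_mul_of_pos_right hss' hui)
    _ = ψ (s' • u) := by rw [← smul_eq_mul, ← Pi.smul_apply, update_eq_self]

end ArgwiseStrictMono

theorem ConvexOn.exists_pos_mul_sub_le_sub {g : ℝ → ℝ} (hg : ConvexOn ℝ univ g)
    (hmono : StrictMono g) (a : ℝ) :
    ∃ δ > 0, ∀ t t', a ≤ t' → t' ≤ t → (t - t') * δ ≤ g t - g t' := by
  refine ⟨g a - g (a - 1), sub_pos.mpr (hmono (sub_one_lt a)), fun t t' hat' htt' => ?_⟩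
  rcases htt'.eq_or_lt with rfl | htt'
  · simp
  have hslope : g a - g (a - 1) ≤ (g t - g t') / (t - t') :=
    calc g a - g (a - 1) = (g a - g (a - 1)) / (a - (a - 1)) := by ring
      _ ≤ (g t' - g (a - 1)) / (t' - (a - 1)) :=
        hg.secant_mono trivial trivial trivial (by linarith) (by linarith) hat'
      _ ≤ (g t - g t') / (t - t') :=
        hg.slope_mono_adjacent trivial trivial (by linarith) htt'
  rwa [le_div_iff₀' (sub_pos.mpr htt')] at hslope

theorem stmt15_general (k : ℕ) (ψ : (Fin k → ℝ) → ℝ)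
    (hconv : ConvexOn ℝ Set.univ ψ) (hmono : ArgwiseStrictMono ψ)
    (u : Fin k → ℝ) (hu : ∀ i, 0 ≤ u i) (hu0 : u ≠ 0) :
    ∃ δ > (0 : ℝ), ∀ t t' : ℝ, t ∈ Set.Icc (-2 : ℝ) 0 → t' ∈ Set.Icc (-2 : ℝ) 0 →
      t' ≤ t → (t - t') * δ ≤ ψ (t • u) - ψ (t' • u) := by
  have hray : ConvexOn ℝ univ fun s : ℝ => ψ (s • u) := by
    simpa [comp_def] using hconv.comp_linearMap (LinearMap.toSpanSingleton ℝ _ u)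
  obtain ⟨δ, hδ, hslope⟩ := hray.exists_pos_mul_sub_le_sub (hmono.strictMono_smul hu hu0) (-2)
  exact ⟨δ, hδ, fun t t' _ ht' htt' => hslope t t' ht'.1 htt'⟩

/-- for `ψ : ℝ^k → ℝ` convex and argument-wise strictly increasing and
`u ≥ 0`, `u ≠ 0`, there is `δ > 0` with `(t − t')·δ ≤ ψ(t·u) − ψ(t'·u)` for all
`t' ≤ t` in `[−2, 0]`. -/
theorem stmt15 (k : ℕ) (hk : 1 ≤ k) (ψ : (Fin k → ℝ) → ℝ)
    (hconv : ConvexOn ℝ Set.univ ψ) (hmono : ArgwiseStrictMono ψ)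
    (u : Fin k → ℝ) (hu : ∀ i, 0 ≤ u i) (hu0 : u ≠ 0) :
    ∃ δ > (0 : ℝ), ∀ t t' : ℝ, t ∈ Set.Icc (-2 : ℝ) 0 → t' ∈ Set.Icc (-2 : ℝ) 0 →
      t' ≤ t → (t - t') * δ ≤ ψ (t • u) - ψ (t' • u) :=
  stmt15_general k ψ hconv hmono u hu hu0
end
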